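/- Let L ∈ (0,∞) and p ∈ [1,∞). For every measurable f on a non-atomic measure space with μ(X) = L: ∫₀ᴸ (1/t) ∫₀ᵗ f*(s)^p ds dt = ∫₀ᴸ f*(s)^p log(L/s) ds. Consequently e^{−1/p} ‖f‖_{L^{p,p;1/p}} ≤ ‖f‖_{(L^p)^⟨p⟩} ≤ ‖f‖_{L^{p,p;1/p}}, where ‖f‖_{L^{p,p;1/p}} = (∫₀ᴸ f*(s)^p log(eL/s) ds)^{1/p} and ‖f‖_{(L^p)^⟨p⟩} = (∫₀ᴸ (1/t)∫₀ᵗ f*(s)^p ds dt)^{1/p}. -/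

import Mathlib

open MeasureTheory ENNReal Set

/-- The decreasing rearrangement of `f` with respect to `μ`. -/
noncomputable def rearr {X : Type*} [MeasurableSpace X] (μ : Measure X) (f : X → ℝ) (t : ℝ) : ℝ :=
  sInf {l : ℝ | 0 ≤ l ∧ μ {x | l < |f x|} ≤ ENNReal.ofReal t}

/-- The maximal (average) decreasing rearrangement `f**`. -/
noncomputable def maxRearr {X : Type*} [MeasurableSpace X] (μ : Measure X) (f : X → ℝ) (t : ℝ) : ℝ :=
  (1 / t) * ∫ s in Set.Ioc (0:ℝ) t, rearr μ f s

/-!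
Tonelli on the triangle `0 < s ≤ t ≤ L`, together with `∫ₛᴸ dt / t = log (L / s)`, gives the
identity. Since `log (L / s) ≤ log (e L / s)`, the upper bound is immediate. For the lower bound,
substitute `s = e σ`: this trades the weight `log (e L / s)` for `log (L / σ)` at the cost of the
Jacobian `e`, while `f*(e σ) ≤ f*(σ)` because `f*` decreases; hence the `log (e L / s)` integral is
at most `e` times the `log (L / s)` one, and `e ^ (-1/p) · e ^ (1/p) = 1`.
-/

section Rearrangement

variable {X : Type*} [MeasurableSpace X] (μ : Measure X) [IsFiniteMeasure μ] {f : X → ℝ}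

open Filter Topology in
lemma exists_nat_measure_lt_abs_le (hf : Measurable f) {t : ℝ} (ht : 0 < t) :
    ∃ n : ℕ, μ {x | (n : ℝ) < |f x|} ≤ ENNReal.ofReal t := by
  have hlim : Tendsto (fun n : ℕ => μ {x | (n : ℝ) < |f x|}) atTop
      (𝓝 (μ (⋂ n : ℕ, {x | (n : ℝ) < |f x|}))) :=
    tendsto_measure_iInter_atTop
      (fun n => (measurableSet_lt measurable_const hf.abs).nullMeasurableSet)
      (fun _ _ hnm _ hx => lt_of_le_of_lt (α := ℝ) (Nat.cast_le.mpr hnm) hx) ⟨0, measure_ne_top μ _⟩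
  have hempty : (⋂ n : ℕ, {x | (n : ℝ) < |f x|}) = ∅ :=
    eq_empty_iff_forall_notMem.mpr fun x hx =>
      (exists_nat_ge |f x|).elim fun n hn => (mem_iInter.mp hx n).not_ge hn
  rw [hempty, measure_empty] at hlim
  exact ((hlim.eventually_lt_const (ENNReal.ofReal_pos.2 ht)).exists).imp fun _ => le_of_lt

lemma rearr_antitoneOn (hf : Measurable f) : AntitoneOn (rearr μ f) (Ioi 0) := by
  intro t ht t' _ htt'
  obtain ⟨n, hn⟩ := exists_nat_measure_lt_abs_le μ hf ht
  exact csInf_le_csInf ⟨0, fun l hl => hl.1⟩ ⟨n, n.cast_nonneg, hn⟩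
    fun l hl => ⟨hl.1, hl.2.trans (ENNReal.ofReal_le_ofReal htt')⟩

end Rearrangement

lemma setLIntegral_Icc_inv {s L : ℝ} (hs : 0 < s) (hsL : s ≤ L) :
    ∫⁻ t in Icc s L, (ENNReal.ofReal t)⁻¹ = ENNReal.ofReal (Real.log (L / s)) := by
  have hint : IntegrableOn (fun t : ℝ => t⁻¹) (Icc s L) :=
    ContinuousOn.integrableOn_compact isCompact_Icc
      (continuousOn_inv₀.mono fun t ht => (hs.trans_le ht.1).ne')
  rw [setLIntegral_congr_fun measurableSet_Icc
      fun t ht => (ENNReal.ofReal_inv_of_pos (hs.trans_le ht.1)).symm,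
    ← ofReal_integral_eq_lintegral_ofReal hint
      (ae_restrict_of_forall_mem measurableSet_Icc fun t ht => inv_nonneg.2 (hs.trans_le ht.1).le),
    integral_Icc_eq_integral_Ioc, ← intervalIntegral.integral_of_le hsL,
    integral_inv_of_pos hs (hs.trans_le hsL)]

lemma setLIntegral_mul_setLIntegral_Ioc_swap {a L : ℝ} {w g : ℝ → ℝ≥0∞} (hw : Measurable w)
    (hg : AEMeasurable g (volume.restrict (Ioc a L))) :
    ∫⁻ t in Ioc a L, w t * ∫⁻ s in Ioc a t, g s = ∫⁻ s in Ioc a L, g s * ∫⁻ t in Icc s L, w t := by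
  set k : ℝ × ℝ → ℝ≥0∞ := {q | q.2 ≤ q.1}.indicator fun q => w q.1 * g q.2
  have hk : AEMeasurable k ((volume.restrict (Ioc a L)).prod (volume.restrict (Ioc a L))) :=
    ((hw.comp measurable_fst).aemeasurable.mul
        (hg.comp_quasiMeasurePreserving Measure.quasiMeasurePreserving_snd)).indicator
      (measurableSet_le measurable_snd measurable_fst)
  have hinner : ∀ t ∈ Ioc a L, w t * ∫⁻ s in Ioc a t, g s = ∫⁻ s in Ioc a L, k (t, s) := by
    intro t ht
    have hset : Iic t ∩ Ioc a L = Ioc a t := by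
      ext s; simp only [mem_inter_iff, mem_Iic, mem_Ioc]
      exact ⟨fun h => ⟨h.2.1, h.1⟩, fun h => ⟨h.2, h.1, h.2.trans ht.2⟩⟩
    have hkt : (fun s => k (t, s)) = (Iic t).indicator fun s => w t * g s := by
      ext s; simp [k, indicator_apply]
    rw [hkt, lintegral_indicator measurableSet_Iic, Measure.restrict_restrict measurableSet_Iic,
      hset, lintegral_const_mul'' _ (hg.mono_set (Ioc_subset_Ioc_right ht.2))]
  have houter : ∀ s ∈ Ioc a L, ∫⁻ t in Ioc a L, k (t, s) = g s * ∫⁻ t in Icc s L, w t := by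
    intro s hs
    have hset : Ici s ∩ Ioc a L = Icc s L := by
      ext t; simp only [mem_inter_iff, mem_Ici, mem_Ioc, mem_Icc]
      exact ⟨fun h => ⟨h.1, h.2.2⟩, fun h => ⟨h.1, hs.1.trans_le h.1, h.2⟩⟩
    have hks : (fun t => k (t, s)) = (Ici s).indicator fun t => g s * w t := by
      ext t; simp [k, indicator_apply, mul_comm]
    rw [hks, lintegral_indicator measurableSet_Ici, Measure.restrict_restrict measurableSet_Ici,
      hset, lintegral_const_mul _ hw]
  rw [setLIntegral_congr_fun measurableSet_Ioc hinner,
    lintegral_lintegral_swap (f := fun t s => k (t, s)) hk]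
  exact setLIntegral_congr_fun measurableSet_Ioc houter

lemma setLIntegral_average_eq_setLIntegral_mul_log {L : ℝ} {g : ℝ → ℝ≥0∞}
    (hg : AEMeasurable g (volume.restrict (Ioc 0 L))) :
    ∫⁻ t in Ioc (0:ℝ) L, (1 / ENNReal.ofReal t) * ∫⁻ s in Ioc (0:ℝ) t, g s =
      ∫⁻ s in Ioc (0:ℝ) L, g s * ENNReal.ofReal (Real.log (L / s)) := by
  simp_rw [one_div]
  rw [setLIntegral_mul_setLIntegral_Ioc_swap (w := fun t => (ENNReal.ofReal t)⁻¹)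
    ENNReal.measurable_ofReal.inv hg]
  exact setLIntegral_congr_fun measurableSet_Ioc fun s hs => by
    rw [setLIntegral_Icc_inv hs.1 hs.2]

lemma setLIntegral_Ioc_zero_eq_mul_setLIntegral_comp_mul_left {c : ℝ} (hc : 0 < c) (L : ℝ)
    (F : ℝ → ℝ≥0∞) :
    ∫⁻ s in Ioc 0 L, F s = ENNReal.ofReal c * ∫⁻ σ in Ioc 0 (L / c), F (c * σ) := by
  have himage : (c * ·) '' Ioc 0 (L / c) = Ioc 0 L := by
    rw [image_mul_left_Ioc hc, mul_zero, mul_div_cancel₀ _ hc.ne']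
  rw [← himage, lintegral_image_eq_lintegral_abs_deriv_mul (f' := fun _ => c) measurableSet_Ioc
      (fun σ _ => by simpa using ((hasDerivAt_id σ).const_mul c).hasDerivWithinAt)
      (mul_right_injective₀ hc.ne').injOn,
    abs_of_pos hc, lintegral_const_mul' _ _ ENNReal.ofReal_ne_top]

lemma setLIntegral_mul_log_mul_div_le {g : ℝ → ℝ≥0∞} (hg : AntitoneOn g (Ioi 0)) {L c : ℝ}
    (hL : 0 ≤ L) (hc : 1 ≤ c) :
    ∫⁻ s in Ioc 0 L, g s * ENNReal.ofReal (Real.log (c * L / s)) ≤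
      ENNReal.ofReal c * ∫⁻ s in Ioc 0 L, g s * ENNReal.ofReal (Real.log (L / s)) := by
  have hc0 : 0 < c := one_pos.trans_le hc
  rw [setLIntegral_Ioc_zero_eq_mul_setLIntegral_comp_mul_left hc0]
  gcongr ENNReal.ofReal c * ?_
  calc ∫⁻ σ in Ioc 0 (L / c), g (c * σ) * ENNReal.ofReal (Real.log (c * L / (c * σ)))
      ≤ ∫⁻ σ in Ioc 0 (L / c), g σ * ENNReal.ofReal (Real.log (L / σ)) := by
        refine setLIntegral_mono' measurableSet_Ioc fun σ hσ => ?_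
        rw [mul_div_mul_left _ _ hc0.ne']
        gcongr
        exact hg hσ.1 (mul_pos hc0 hσ.1) (le_mul_of_one_le_left hσ.1.le hc)
    _ ≤ ∫⁻ σ in Ioc 0 L, g σ * ENNReal.ofReal (Real.log (L / σ)) :=
        lintegral_mono_set (Ioc_subset_Ioc_right (div_le_self hL hc))

lemma ofReal_exp_neg_mul_rpow_le {A B : ℝ≥0∞} (hAB : A ≤ ENNReal.ofReal (Real.exp 1) * B)
    {r : ℝ} (hr : 0 ≤ r) : ENNReal.ofReal (Real.exp (-r)) * A ^ r ≤ B ^ r :=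
  calc ENNReal.ofReal (Real.exp (-r)) * A ^ r
      ≤ ENNReal.ofReal (Real.exp (-r)) * (ENNReal.ofReal (Real.exp 1) * B) ^ r := by gcongr
    _ = B ^ r := by
        rw [ENNReal.mul_rpow_of_nonneg _ _ hr, ← mul_assoc,
          ENNReal.ofReal_rpow_of_pos (Real.exp_pos 1), ← ENNReal.ofReal_mul (Real.exp_pos _).le,
          Real.exp_one_rpow, ← Real.exp_add, neg_add_cancel, Real.exp_zero, ENNReal.ofReal_one,
          one_mul]

theorem stmt17_general {X : Type*} [MeasurableSpace X] (μ : Measure X)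
    (L : ℝ) (hL : 0 < L) (hμ : μ Set.univ = ENNReal.ofReal L)
    (p : ℝ) (hp : 1 ≤ p) (f : X → ℝ) (hf : Measurable f) :
    (∫⁻ t in Set.Ioc (0:ℝ) L,
        (1 / ENNReal.ofReal t) * ∫⁻ s in Set.Ioc (0:ℝ) t, ENNReal.ofReal (rearr μ f s) ^ p) =
      (∫⁻ s in Set.Ioc (0:ℝ) L,
        ENNReal.ofReal (rearr μ f s) ^ p * ENNReal.ofReal (Real.log (L / s))) ∧
    ENNReal.ofReal (Real.exp (-(1/p))) *
        (∫⁻ s in Set.Ioc (0:ℝ) L,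
          ENNReal.ofReal (rearr μ f s) ^ p *
            ENNReal.ofReal (Real.log (Real.exp 1 * L / s))) ^ (1/p) ≤
      (∫⁻ t in Set.Ioc (0:ℝ) L,
        (1 / ENNReal.ofReal t) *
          ∫⁻ s in Set.Ioc (0:ℝ) t, ENNReal.ofReal (rearr μ f s) ^ p) ^ (1/p) ∧
    (∫⁻ t in Set.Ioc (0:ℝ) L,
        (1 / ENNReal.ofReal t) *
          ∫⁻ s in Set.Ioc (0:ℝ) t, ENNReal.ofReal (rearr μ f s) ^ p) ^ (1/p) ≤
      (∫⁻ s in Set.Ioc (0:ℝ) L,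
        ENNReal.ofReal (rearr μ f s) ^ p *
          ENNReal.ofReal (Real.log (Real.exp 1 * L / s))) ^ (1/p) := by
  have : IsFiniteMeasure μ := ⟨by simp [hμ]⟩
  have hp0 : 0 ≤ 1 / p := by positivity
  set g : ℝ → ℝ≥0∞ := fun s => ENNReal.ofReal (rearr μ f s) ^ p
  have hg : AntitoneOn g (Ioi 0) := fun a ha b hb hab =>
    ENNReal.rpow_le_rpow (ENNReal.ofReal_le_ofReal (rearr_antitoneOn μ hf ha hb hab))
      (by positivity)
  have hgL : AEMeasurable g (volume.restrict (Ioc 0 L)) :=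
    (aemeasurable_restrict_of_antitoneOn measurableSet_Ioi hg).mono_set Ioc_subset_Ioi_self
  have hE : 1 ≤ Real.exp 1 := Real.one_le_exp zero_le_one
  have hlog : ∫⁻ s in Ioc 0 L, g s * ENNReal.ofReal (Real.log (L / s)) ≤
      ∫⁻ s in Ioc 0 L, g s * ENNReal.ofReal (Real.log (Real.exp 1 * L / s)) := by
    refine setLIntegral_mono' measurableSet_Ioc fun s hs => ?_
    gcongr
    · exact div_pos hL hs.1
    · exact hs.1.le
    · exact le_mul_of_one_le_left hL.le hE
  rw [setLIntegral_average_eq_setLIntegral_mul_log hgL]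
  exact ⟨rfl, ofReal_exp_neg_mul_rpow_le (setLIntegral_mul_log_mul_div_le hg hL.le hE) hp0,
    ENNReal.rpow_le_rpow hlog hp0⟩

theorem stmt17 {X : Type*} [MeasurableSpace X] (μ : Measure X) [NullSingletonClass μ]
    (L : ℝ) (hL : 0 < L) (hμ : μ Set.univ = ENNReal.ofReal L)
    (p : ℝ) (hp : 1 ≤ p) (f : X → ℝ) (hf : Measurable f) :
    (∫⁻ t in Set.Ioc (0:ℝ) L,
        (1 / ENNReal.ofReal t) * ∫⁻ s in Set.Ioc (0:ℝ) t, ENNReal.ofReal (rearr μ f s) ^ p) =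
      (∫⁻ s in Set.Ioc (0:ℝ) L,
        ENNReal.ofReal (rearr μ f s) ^ p * ENNReal.ofReal (Real.log (L / s))) ∧
    ENNReal.ofReal (Real.exp (-(1/p))) *
        (∫⁻ s in Set.Ioc (0:ℝ) L,
          ENNReal.ofReal (rearr μ f s) ^ p *
            ENNReal.ofReal (Real.log (Real.exp 1 * L / s))) ^ (1/p) ≤
      (∫⁻ t in Set.Ioc (0:ℝ) L,
        (1 / ENNReal.ofReal t) *
          ∫⁻ s in Set.Ioc (0:ℝ) t, ENNReal.ofReal (rearr μ f s) ^ p) ^ (1/p) ∧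
    (∫⁻ t in Set.Ioc (0:ℝ) L,
        (1 / ENNReal.ofReal t) *
          ∫⁻ s in Set.Ioc (0:ℝ) t, ENNReal.ofReal (rearr μ f s) ^ p) ^ (1/p) ≤
      (∫⁻ s in Set.Ioc (0:ℝ) L,
        ENNReal.ofReal (rearr μ f s) ^ p *
          ENNReal.ofReal (Real.log (Real.exp 1 * L / s))) ^ (1/p) :=
  stmt17_general μ L hL hμ p hp f hf
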